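/- Let α, β be orthonormal vectors in ℝ⁷. Then for all vectors u, v, w orthogonal to α: (i) [ι_α(α^#∧φ₀)](u,v,w) = [(ι_βφ₀)∧β^# + ι_β(β^#∧φ₀)](u,v,w), i.e. Re Ω_α = ω_β∧β^# + Re Ω_β on α⊥; (ii) (ι_αψ₀)(u,v,w) = [ι_α(ι_β(β^#∧ψ₀)) − (ι_α ι_β ψ₀)∧β^#](u,v,w), i.e. Im Ω_α = α⌟(⋆ω_β) − (α⌟Im Ω_β)∧β^# on α⊥; (iii) (ι_αφ₀)(u,v) = [ι_α(ι_β(β^#∧φ₀)) + (ι_α ι_β φ₀)∧β^#](u,v), i.e. ω_α = α⌟Re Ω_β + (α⌟ω_β)∧β^# on α⊥. -/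
import Mathlib


open scoped RealInnerProductSpace

noncomputable section

/-- `V7` is ℝ⁷ with its Euclidean inner product. -/
abbrev V7 : Type := EuclideanSpace ℝ (Fin 7)

/-- Evaluation of the wedge product `eⁱ ∧ eʲ ∧ eᵏ` of dual basis 1-forms on three vectors. -/
def w3 (i j k : Fin 7) (u v w : V7) : ℝ :=
  Matrix.det !![u i, u j, u k; v i, v j, v k; w i, w j, w k]

/-- Evaluation of the wedge product `eⁱ ∧ eʲ ∧ eᵏ ∧ eˡ` on four vectors. -/
def w4 (i j k l : Fin 7) (u v w z : V7) : ℝ :=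
  Matrix.det !![u i, u j, u k, u l; v i, v j, v k, v l;
                w i, w j, w k, w l; z i, z j, z k, z l]

/-- The standard G₂ 3-form φ₀ = e¹²³+e¹⁴⁵+e¹⁶⁷+e²⁴⁶−e²⁵⁷−e³⁴⁷−e³⁵⁶ (0-indexed). -/
def phi0 (u v w : V7) : ℝ :=
  w3 0 1 2 u v w + w3 0 3 4 u v w + w3 0 5 6 u v w + w3 1 3 5 u v w
    - w3 1 4 6 u v w - w3 2 3 6 u v w - w3 2 4 5 u v w

/-- The 4-form ψ₀ = ∗φ₀ = e⁴⁵⁶⁷+e²³⁶⁷+e²³⁴⁵+e¹³⁵⁷−e¹³⁴⁶−e¹²⁵⁶−e¹²⁴⁷ (0-indexed). -/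
def psi0 (u v w z : V7) : ℝ :=
  w4 3 4 5 6 u v w z + w4 1 2 5 6 u v w z + w4 1 2 3 4 u v w z + w4 0 2 4 6 u v w z
    - w4 0 2 3 5 u v w z - w4 0 1 4 5 u v w z - w4 0 1 3 6 u v w z

/-- The dual 1-form γ^# = ⟨γ,·⟩ of a vector γ. -/
def sharp (γ : V7) : V7 → ℝ := fun a => ⟪γ, a⟫

/-- Pointwise evaluation of the wedge (1-form) ∧ (1-form) on two vectors. -/
def wedge11 (f g : V7 → ℝ) (a b : V7) : ℝ := f a * g b - f b * g a

/-- Pointwise evaluation of the wedge (2-form) ∧ (1-form) on three vectors. -/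
def wedge21 (A : V7 → V7 → ℝ) (f : V7 → ℝ) (a b c : V7) : ℝ :=
  A a b * f c - A a c * f b + A b c * f a

/-- Pointwise evaluation of the wedge (1-form) ∧ (3-form) on four vectors. -/
def wedge13 (f : V7 → ℝ) (C : V7 → V7 → V7 → ℝ) (a b c d : V7) : ℝ :=
  f a * C b c d - f b * C a c d + f c * C a b d - f d * C a b c

/-- Pointwise evaluation of the wedge (1-form) ∧ (4-form) on five vectors. -/
def wedge14 (f : V7 → ℝ) (D : V7 → V7 → V7 → V7 → ℝ) (a b c d e : V7) : ℝ :=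
  f a * D b c d e - f b * D a c d e + f c * D a b d e - f d * D a b c e + f e * D a b c d

/-- ω_γ = ι_γ φ₀. -/
def omegaF (γ : V7) (a b : V7) : ℝ := phi0 γ a b

/-- Re Ω_γ = ι_γ(γ^# ∧ φ₀). -/
def ReOmega (γ : V7) (a b c : V7) : ℝ := wedge13 (sharp γ) phi0 γ a b c

/-- Im Ω_γ = ι_γ ψ₀. -/
def ImOmega (γ : V7) (a b c : V7) : ℝ := psi0 γ a b c

/-- ⋆ω_γ = ι_γ(γ^# ∧ ψ₀), the Hodge dual of ω_γ within the hyperplane γ⊥. -/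
def starOmega (γ : V7) (a b c d : V7) : ℝ := wedge14 (sharp γ) psi0 γ a b c d

/-- Proposition 6: for orthonormal vector fields α, β on (M,φ), on X_α one has
(i)  Re Ω_α = ω_β ∧ β^# + Re Ω_β,
(ii) Im Ω_α = α⌟(⋆ω_β) − (α⌟Im Ω_β) ∧ β^#,
(iii) ω_α = α⌟Re Ω_β + (α⌟ω_β) ∧ β^#. -/
theorem prop6_structures_determine_each_other
    (α β : V7) (hα : ‖α‖ = 1) (hβ : ‖β‖ = 1) (hαβ : ⟪α, β⟫ = (0 : ℝ))
    (u v w : V7) (hu : ⟪α, u⟫ = (0 : ℝ)) (hv : ⟪α, v⟫ = (0 : ℝ)) (hw : ⟪α, w⟫ = (0 : ℝ)) :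
    ReOmega α u v w = wedge21 (omegaF β) (sharp β) u v w + ReOmega β u v w ∧
    ImOmega α u v w =
      starOmega β α u v w - wedge21 (fun a b => ImOmega β α a b) (sharp β) u v w ∧
    omegaF α u v = ReOmega β α u v + wedge11 (fun a => omegaF β α a) (sharp β) u v := by
  have hαα : ⟪α, α⟫ = (1 : ℝ) := by
    rw [real_inner_self_eq_norm_mul_norm, hα]; norm_num
  have hββ : ⟪β, β⟫ = (1 : ℝ) := by
    rw [real_inner_self_eq_norm_mul_norm, hβ]; norm_num
  have hβα : ⟪β, α⟫ = (0 : ℝ) := by rw [real_inner_comm]; exact hαβ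
  refine ⟨?_, ?_, ?_⟩
  · simp only [ReOmega, wedge13, wedge21, omegaF, sharp]
    linear_combination (phi0 u v w) * hαα - (phi0 α v w) * hu + (phi0 α u w) * hv
      - (phi0 α u v) * hw - (phi0 u v w) * hββ
  · simp only [ImOmega, starOmega, wedge14, wedge21, sharp]
    linear_combination (psi0 β u v w) * hβα - (psi0 α u v w) * hββ
  · simp only [omegaF, ReOmega, wedge13, wedge11, sharp]
    linear_combination (phi0 β u v) * hβα - (phi0 α u v) * hββ
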